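/- Let Pₖ be the distorted measures with parameter δ ∈ (0, 1/2] on Q = S₁ × ⋯ × Sₙ. Then for every 0 ≤ k ≤ n and every hyperplane A with F(A) ⊆ {1, …, k}, one has Pₖ(A) ≤ ∏_{j ∈ F(A)} 1/((1−δ)|Sⱼ|). -/

import Mathlib

open Finset

attribute [local instance] Classical.propDecidable

/-- A hyperplane in a product `∀ i, S i`: each coordinate factor is either
the full set or a singleton. -/
structure Hyperplane {ι : Type*} (S : ι → Type*) where
  Y : ∀ i, Set (S i)
  full_or_singleton : ∀ i, Y i = Set.univ ∨ ∃ a, Y i = {a}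

namespace Hyperplane

variable {ι : Type*} {S : ι → Type*}

/-- The set of points of the hyperplane. -/
def toSet (A : Hyperplane S) : Set (∀ i, S i) := {x | ∀ i, x i ∈ A.Y i}

/-- The set of fixed coordinates. -/
def fixedSet (A : Hyperplane S) : Set ι := {i | A.Y i ≠ Set.univ}

/-- The fixed coordinates as a `Finset`. -/
noncomputable def fixedFinset [Fintype ι] (A : Hyperplane S) : Finset ι :=
  Finset.univ.filter fun i => A.Y i ≠ Set.univ

end Hyperplane

section Distortion

variable {n : ℕ} {S : Fin n → Type*}

/-- The proportion of the fibre through `x` in direction `k` covered by `B`. -/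
noncomputable def alpha [∀ i, Fintype (S i)] (B : Set (∀ i, S i)) (k : Fin n)
    (x : ∀ i, S i) : ℝ :=
  (Finset.univ.filter fun y : S k => Function.update x k y ∈ B).card / Fintype.card (S k)

/-- The distorted point masses `P_k` of the distortion method, as densities on the
full product: `P 0` is uniform, and `P (k+1)` reweights `P k` on each fibre in
direction `k` according to the covered set `B k`. -/
noncomputable def distP [∀ i, Fintype (S i)] (B : Fin n → Set (∀ i, S i)) (δ : ℝ) :
    ℕ → (∀ i, S i) → ℝ
  | 0, _ => 1 / Fintype.card (∀ i, S i)
  | (k + 1), x =>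
    (if h : k < n then
      (if x ∈ B ⟨k, h⟩ then
        max 0 ((alpha (B ⟨k, h⟩) ⟨k, h⟩ x - δ) / (alpha (B ⟨k, h⟩) ⟨k, h⟩ x * (1 - δ)))
      else
        min (1 / (1 - alpha (B ⟨k, h⟩) ⟨k, h⟩ x)) (1 / (1 - δ)))
     else 1) * distP B δ k x

/-- The `P_k`-measure of a subset of the product. -/
noncomputable def distPMeas [∀ i, Fintype (S i)] (B : Fin n → Set (∀ i, S i)) (δ : ℝ)
    (k : ℕ) (X : Set (∀ i, S i)) : ℝ :=
  ∑ z : ∀ i, S i, if z ∈ X then distP B δ k z else 0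

/-- `X` depends only on the coordinates `i` with `i < m`. -/
def DistDependsOn (X : Set (∀ i, S i)) (m : ℕ) : Prop :=
  ∀ x y : ∀ i, S i, (∀ i : Fin n, (i : ℕ) < m → x i = y i) → x ∈ X → y ∈ X

/-- `B_k`: the union of the hyperplanes of `𝒜` whose largest fixed coordinate is `k`. -/
noncomputable def coverSet [∀ i, Fintype (S i)] (𝒜 : Finset (Hyperplane S)) (k : Fin n) :
    Set (∀ i, S i) :=
  {x | ∃ A ∈ 𝒜, A.fixedFinset.max = (k : WithBot (Fin n)) ∧ x ∈ A.toSet}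

/-- `A^{[m]}`: the hyperplane obtained from `A` by replacing the factors with
index `≥ m` by the full sets. -/
def projSet (A : Hyperplane S) (m : ℕ) : Set (∀ i, S i) :=
  {x | ∀ i : Fin n, (i : ℕ) < m → x i ∈ A.Y i}

end Distortion

section AuxLemmas

variable {n : ℕ} {S : Fin n → Type*} [∀ i, Fintype (S i)]

/-- Fibrewise comparison of sums over the product. -/
lemma sum_fiber_le [∀ i, Nonempty (S i)] (κ : Fin n) (f c : (∀ i, S i) → ℝ)
    (h : ∀ z, ∑ y : S κ, f (Function.update z κ y) ≤ ∑ y : S κ, c (Function.update z κ y)) :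
    ∑ z, f z ≤ ∑ z, c z := by
  classical
  set e := Equiv.piSplitAt κ S with he
  have upd : ∀ (y : S κ) (r : ∀ j : {j // j ≠ κ}, S j),
      e.symm (y, r) = Function.update (e.symm (Classical.arbitrary (S κ), r)) κ y := by
    intro y r; funext j
    rcases eq_or_ne j κ with rfl | hj
    · simp [he, Equiv.piSplitAt_symm_apply]
    · simp [he, Equiv.piSplitAt_symm_apply, hj, Function.update_of_ne hj]
  have key : ∀ g : (∀ i, S i) → ℝ,
      ∑ z, g z = ∑ r : (∀ j : {j // j ≠ κ}, S j), ∑ y : S κ,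
        g (Function.update (e.symm (Classical.arbitrary (S κ), r)) κ y) := by
    intro g
    rw [← Equiv.sum_comp e.symm g, Fintype.sum_prod_type, Finset.sum_comm]
    simp only [← upd]
  rw [key f, key c]
  exact Finset.sum_le_sum fun r _ => h _

lemma alpha_nonneg (B : Set (∀ i, S i)) (κ : Fin n) (x : ∀ i, S i) : 0 ≤ alpha B κ x :=
  div_nonneg (Nat.cast_nonneg _) (Nat.cast_nonneg _)

lemma alpha_le_one (B : Set (∀ i, S i)) (κ : Fin n) (x : ∀ i, S i) : alpha B κ x ≤ 1 := by
  apply div_le_one_of_le₀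
  · exact_mod_cast (Finset.card_le_card (Finset.filter_subset _ _)).trans (by simp)
  · exact Nat.cast_nonneg _

lemma alpha_update (B : Set (∀ i, S i)) (κ : Fin n) (x : ∀ i, S i) (y : S κ) :
    alpha B κ (Function.update x κ y) = alpha B κ x := by
  simp [alpha, Function.update_idem]

/-- The multiplicative factor in the recursion for `distP`. -/
noncomputable def fac (B : Fin n → Set (∀ i, S i)) (δ : ℝ) (k : ℕ) (x : ∀ i, S i) : ℝ :=
  if h : k < n then
    (if x ∈ B ⟨k, h⟩ then
      max 0 ((alpha (B ⟨k, h⟩) ⟨k, h⟩ x - δ) / (alpha (B ⟨k, h⟩) ⟨k, h⟩ x * (1 - δ)))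
    else
      min (1 / (1 - alpha (B ⟨k, h⟩) ⟨k, h⟩ x)) (1 / (1 - δ)))
  else 1

lemma distP_succ (B : Fin n → Set (∀ i, S i)) (δ : ℝ) (k : ℕ) (x : ∀ i, S i) :
    distP B δ (k + 1) x = fac B δ k x * distP B δ k x := rfl

lemma fac_nonneg (B : Fin n → Set (∀ i, S i)) {δ : ℝ} (hδ : δ < 1) (k : ℕ) (x : ∀ i, S i) :
    0 ≤ fac B δ k x := by
  unfold fac
  split_ifs with h hb
  · exact le_max_left _ _
  · refine le_min (one_div_nonneg.2 ?_) (one_div_nonneg.2 (by linarith))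
    linarith [alpha_le_one (B ⟨k, h⟩) ⟨k, h⟩ x]
  · norm_num

lemma fac_le (B : Fin n → Set (∀ i, S i)) {δ : ℝ} (hδ0 : 0 < δ) (hδ : δ < 1)
    (k : ℕ) (x : ∀ i, S i) : fac B δ k x ≤ 1 / (1 - δ) := by
  have h1δ : (0:ℝ) < 1 - δ := by linarith
  unfold fac
  split_ifs with h hb
  · apply max_le (by positivity)
    rcases eq_or_lt_of_le (alpha_nonneg (B ⟨k, h⟩) ⟨k, h⟩ x) with h0 | h0
    · rw [← h0, zero_mul, div_zero]
      positivity
    · rw [div_le_div_iff₀ (by positivity) h1δ]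
      nlinarith
  · exact min_le_right _ _
  · rw [le_div_iff₀ h1δ]; linarith

lemma sum_fac [∀ i, Nonempty (S i)] (B : Fin n → Set (∀ i, S i)) {δ : ℝ}
    (hδ0 : 0 < δ) (hδ : δ ≤ 1 / 2) {k : ℕ} (h : k < n) (z : ∀ i, S i) :
    ∑ y : S ⟨k, h⟩, fac B δ k (Function.update z ⟨k, h⟩ y)
      = (Fintype.card (S ⟨k, h⟩) : ℝ) := by
  classical
  have h1δ : (0:ℝ) < 1 - δ := by linarith
  set κ : Fin n := ⟨k, h⟩ with hκ
  set N : ℕ := Fintype.card (S κ) with hN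
  set m : ℕ := (Finset.univ.filter fun y : S κ => Function.update z κ y ∈ B κ).card with hm
  have hm_le : m ≤ N := by
    rw [hm, hN, ← Finset.card_univ]
    exact Finset.card_filter_le _ _
  have hN0 : 0 < N := Fintype.card_pos
  set α : ℝ := alpha (B κ) κ z with hαdef
  have hα : α = (m : ℝ) / (N : ℝ) := by
    rw [hαdef, alpha]
  have hα0 : 0 ≤ α := alpha_nonneg _ _ _
  have hα1 : α ≤ 1 := alpha_le_one _ _ _
  set C : ℝ := max 0 ((α - δ) / (α * (1 - δ))) with hC
  set D : ℝ := min (1 / (1 - α)) (1 / (1 - δ)) with hD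
  have hfac : ∀ y : S κ, fac B δ k (Function.update z κ y)
      = if Function.update z κ y ∈ B κ then C else D := by
    intro y
    unfold fac
    rw [dif_pos h]
    rw [show (⟨k, h⟩ : Fin n) = κ from rfl, alpha_update]
  rw [Finset.sum_congr rfl fun y _ => hfac y]
  rw [Finset.sum_ite, Finset.sum_const, Finset.sum_const, ← hm]
  have hcard2 : (Finset.univ.filter fun y : S κ => ¬ Function.update z κ y ∈ B κ).card
      = N - m := by
    rw [Finset.filter_not, Finset.card_sdiff_of_subset (Finset.filter_subset _ _), ← hm, hN,
      Finset.card_univ]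
  rw [hcard2, nsmul_eq_mul, nsmul_eq_mul, Nat.cast_sub hm_le]
  have hN0' : (0:ℝ) < (N:ℝ) := by exact_mod_cast hN0
  rcases Nat.eq_zero_or_pos m with hm0 | hmpos
  · have hαz : α = 0 := by rw [hα, hm0]; simp
    have hDval : D = 1 := by
      rw [hD, hαz, sub_zero, div_one, min_eq_left]
      rw [le_div_iff₀ h1δ]; linarith
    rw [hDval, hm0]
    simp
  · have hm0' : (0:ℝ) < (m:ℝ) := by exact_mod_cast hmpos
    have hαpos : 0 < α := by rw [hα]; positivity
    rcases eq_or_lt_of_le hm_le with hmN | hmN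
    · -- m = N, α = 1
      have hα1' : α = 1 := by rw [hα, hmN]; field_simp
      have hCval : C = 1 := by
        rw [hC, hα1', one_mul, div_self (by linarith : (1:ℝ) - δ ≠ 0), max_eq_right zero_le_one]
      rw [hCval]
      have : (m:ℝ) = (N:ℝ) := by exact_mod_cast hmN
      rw [this]; ring
    · have hmN' : (m:ℝ) < (N:ℝ) := by exact_mod_cast hmN
      have hαlt1 : α < 1 := by rw [hα, div_lt_one hN0']; exact hmN'
      by_cases hαδ : δ ≤ α
      · have hCval : C = (α - δ) / (α * (1 - δ)) := by
          rw [hC, max_eq_right]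
          exact div_nonneg (by linarith) (by positivity)
        have hDval : D = 1 / (1 - δ) := by
          rw [hD, min_eq_right]
          exact one_div_le_one_div_of_le (by linarith) (by linarith)
        rw [hCval, hDval, hα]
        have hm0'' : (m:ℝ) ≠ 0 := ne_of_gt hm0'
        have hN0'' : (N:ℝ) ≠ 0 := ne_of_gt hN0'
        field_simp
        ring
      · push_neg at hαδ
        have hCval : C = 0 := by
          rw [hC, max_eq_left]
          exact div_nonpos_of_nonpos_of_nonneg (by linarith) (by positivity)
        have hDval : D = 1 / (1 - α) := by
          rw [hD, min_eq_left]
          exact one_div_le_one_div_of_le h1δ (by linarith)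
        rw [hCval, hDval, hα]
        have hN0'' : (N:ℝ) ≠ 0 := ne_of_gt hN0'
        have hNm : (N:ℝ) - (m:ℝ) ≠ 0 := by linarith
        have hsub : (1:ℝ) - (m:ℝ)/(N:ℝ) = ((N:ℝ) - m) / N := by field_simp
        rw [hsub, one_div_div, mul_zero, zero_add, mul_div_assoc']
        rw [mul_comm, mul_div_assoc, div_self hNm, mul_one]

lemma distP_nonneg (B : Fin n → Set (∀ i, S i)) {δ : ℝ} (hδ : δ < 1) (k : ℕ)
    (x : ∀ i, S i) : 0 ≤ distP B δ k x := by
  induction k with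
  | zero =>
    unfold distP
    positivity
  | succ k IH =>
    rw [distP_succ]
    exact mul_nonneg (fac_nonneg B hδ k x) IH

lemma distP_agree (B : Fin n → Set (∀ i, S i)) (δ : ℝ)
    (hB : ∀ κ : Fin n, DistDependsOn (B κ) ((κ : ℕ) + 1)) (k : ℕ) :
    ∀ x x' : ∀ i, S i, (∀ i : Fin n, (i : ℕ) < k → x i = x' i) →
      distP B δ k x = distP B δ k x' := by
  induction k with
  | zero => intro x x' _; rfl
  | succ k IH =>
    intro x x' hagree
    rw [distP_succ, distP_succ, IH x x' fun i hi => hagree i (Nat.lt_succ_of_lt hi)]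
    congr 1
    unfold fac
    by_cases hkn : k < n
    · rw [dif_pos hkn, dif_pos hkn]
      set κ : Fin n := ⟨k, hkn⟩ with hκ
      have hup : ∀ (y : S κ) (i : Fin n), (i : ℕ) < k + 1 →
          Function.update x κ y i = Function.update x' κ y i := by
        intro y i hi
        rcases eq_or_ne i κ with rfl | hne
        · simp
        · rw [Function.update_of_ne hne, Function.update_of_ne hne]
          exact hagree i hi
      have hupfun : ∀ y : S κ, (Function.update x κ y ∈ B κ ↔ Function.update x' κ y ∈ B κ) := by
        intro y
        constructor
        · exact fun hy => hB κ _ _ (hup y) hy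
        · exact fun hy => hB κ _ _ (fun i hi => (hup y i hi).symm) hy
      have hmemiff : (x ∈ B κ ↔ x' ∈ B κ) := by
        constructor
        · exact fun hy => hB κ _ _ hagree hy
        · exact fun hy => hB κ _ _ (fun i hi => (hagree i hi).symm) hy
      have hαeq : alpha (B κ) κ x = alpha (B κ) κ x' := by
        have hfil : (Finset.univ.filter fun y : S κ => Function.update x κ y ∈ B κ)
            = Finset.univ.filter fun y : S κ => Function.update x' κ y ∈ B κ :=
          Finset.filter_congr fun y _ => by simpa using hupfun y
        rw [alpha, alpha, hfil]
      rw [hαeq]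
      by_cases hx : x ∈ B κ
      · rw [if_pos hx, if_pos (hmemiff.1 hx)]
      · rw [if_neg hx, if_neg fun h' => hx (hmemiff.2 h')]
    · rw [dif_neg hkn, dif_neg hkn]

lemma distP_update (B : Fin n → Set (∀ i, S i)) (δ : ℝ)
    (hB : ∀ κ : Fin n, DistDependsOn (B κ) ((κ : ℕ) + 1)) {k : ℕ} (h : k < n)
    (z : ∀ i, S i) (y : S ⟨k, h⟩) :
    distP B δ k (Function.update z ⟨k, h⟩ y) = distP B δ k z := by
  refine distP_agree B δ hB k _ _ fun i hi => ?_
  exact Function.update_of_ne (Fin.ne_of_val_ne (Nat.ne_of_lt hi)) _ _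

end AuxLemmas


/-- Bound on the distorted measure of a hyperplane: if `F(A) ⊆ {0, …, k-1}`, then
`P_k(A) ≤ ∏_{j ∈ F(A)} 1/((1-δ)|S_j|)`. -/
theorem distPMeas_hyperplane_le {n : ℕ} {S : Fin n → Type*} [∀ i, Fintype (S i)]
    (hS : ∀ i, 2 ≤ Fintype.card (S i)) (δ : ℝ) (hδ0 : 0 < δ) (hδ1 : δ ≤ 1 / 2)
    (B : Fin n → Set (∀ i, S i)) (hB : ∀ k : Fin n, DistDependsOn (B k) ((k : ℕ) + 1))
    (k : ℕ) (hk : k ≤ n) (A : Hyperplane S) (hA : ∀ i ∈ A.fixedFinset, (i : ℕ) < k) :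
    distPMeas B δ k A.toSet
      ≤ ∏ j ∈ A.fixedFinset, 1 / ((1 - δ) * Fintype.card (S j)) := by
  classical
  haveI : ∀ i, Nonempty (S i) := fun i => Fintype.card_pos_iff.mp (by linarith [hS i])
  induction k generalizing A with
  | zero =>
    have hF : A.fixedFinset = ∅ :=
      Finset.eq_empty_of_forall_notMem fun i hi => Nat.not_lt_zero _ (hA i hi)
    have htoSet : ∀ z : ∀ i, S i, z ∈ A.toSet := by
      intro z i
      have hY : A.Y i = Set.univ := by
        by_contra hY
        have : i ∈ A.fixedFinset := Finset.mem_filter.2 ⟨Finset.mem_univ _, hY⟩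
        rw [hF] at this
        exact absurd this (Finset.notMem_empty _)
      rw [hY]; trivial
    have hc : (0:ℝ) < (Fintype.card (∀ i, S i) : ℝ) := by exact_mod_cast Fintype.card_pos
    have hmeas : distPMeas B δ 0 A.toSet = ∑ _z : ∀ i, S i, 1 / (Fintype.card (∀ i, S i) : ℝ) := by
      unfold distPMeas
      refine Finset.sum_congr rfl fun z _ => ?_
      rw [if_pos (htoSet z)]
      rfl
    rw [hF, Finset.prod_empty, hmeas, Finset.sum_const, Finset.card_univ, nsmul_eq_mul,
      mul_one_div, div_self (ne_of_gt hc)]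
  | succ k IH =>
    have hk' : k < n := Nat.lt_of_succ_le hk
    have hkn : k ≤ n := le_of_lt hk'
    have hδlt : δ < 1 := by linarith
    have h1δ : (0:ℝ) < 1 - δ := by linarith
    set κ : Fin n := ⟨k, hk'⟩ with hκdef
    have hNpos : (0:ℝ) < (Fintype.card (S κ) : ℝ) := by exact_mod_cast Fintype.card_pos
    have hmeas : distPMeas B δ (k+1) A.toSet
        = ∑ z, (if z ∈ A.toSet then fac B δ k z * distP B δ k z else 0) := by
      unfold distPMeas
      refine Finset.sum_congr rfl fun z _ => ?_
      by_cases hz : z ∈ A.toSet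
      · rw [if_pos hz, if_pos hz, distP_succ]
      · rw [if_neg hz, if_neg hz]
    by_cases hκF : κ ∈ A.fixedFinset
    · -- the k-th coordinate is fixed to a singleton {a}
      have hYκ : A.Y κ ≠ Set.univ := (Finset.mem_filter.1 hκF).2
      obtain ⟨a, ha⟩ : ∃ a, A.Y κ = {a} := (A.full_or_singleton κ).resolve_left hYκ
      set A' : Hyperplane S := ⟨fun i => if i = κ then Set.univ else A.Y i, fun i => by
        by_cases hi : i = κ
        · left; simp [hi]
        · simpa [hi] using A.full_or_singleton i⟩ with hA'def
      have hY' : ∀ i, A'.Y i = if i = κ then Set.univ else A.Y i := fun _ => rfl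
      have hF' : A'.fixedFinset = A.fixedFinset.erase κ := by
        ext i
        simp only [Hyperplane.fixedFinset, Finset.mem_filter, Finset.mem_erase,
          Finset.mem_univ, true_and, hY']
        by_cases hi : i = κ
        · simp [hi]
        · simp [hi]
      have hmem' : ∀ (z) (y : S κ), (Function.update z κ y ∈ A'.toSet ↔ z ∈ A'.toSet) := by
        intro z y
        constructor
        · intro hz i
          rcases eq_or_ne i κ with rfl | hne
          · rw [hY', if_pos rfl]; trivial
          · have := hz i; rwa [Function.update_of_ne hne] at this
        · intro hz i
          rcases eq_or_ne i κ with rfl | hne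
          · rw [hY', if_pos rfl]; trivial
          · rw [Function.update_of_ne hne]; exact hz i
      have hmemA : ∀ (z) (y : S κ),
          (Function.update z κ y ∈ A.toSet ↔ (y = a ∧ z ∈ A'.toSet)) := by
        intro z y
        constructor
        · intro hz
          refine ⟨?_, ?_⟩
          · have := hz κ
            rw [Function.update_self, ha] at this
            exact this
          · intro i
            rcases eq_or_ne i κ with rfl | hne
            · rw [hY', if_pos rfl]; trivial
            · rw [hY', if_neg hne]
              have := hz i; rwa [Function.update_of_ne hne] at this
        · rintro ⟨rfl, hz⟩ i
          rcases eq_or_ne i κ with rfl | hne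
          · rw [Function.update_self, ha]; rfl
          · rw [Function.update_of_ne hne]
            have := hz i; rwa [hY', if_neg hne] at this
      have hle : distPMeas B δ (k+1) A.toSet
          ≤ (1 / ((1 - δ) * (Fintype.card (S κ) : ℝ))) * distPMeas B δ k A'.toSet := by
        rw [hmeas]
        unfold distPMeas
        rw [Finset.mul_sum]
        refine sum_fiber_le κ _ _ fun z => ?_
        by_cases hz : z ∈ A'.toSet
        · have hl : ∀ y : S κ, (if Function.update z κ y ∈ A.toSet then
              fac B δ k (Function.update z κ y) * distP B δ k (Function.update z κ y) else 0)
              = (if y = a then fac B δ k (Function.update z κ y) * distP B δ k z else 0) := by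
            intro y
            by_cases hy : y = a
            · rw [if_pos ((hmemA z y).2 ⟨hy, hz⟩), if_pos hy, distP_update B δ hB hk' z y]
            · rw [if_neg (fun hmm => hy ((hmemA z y).1 hmm).1), if_neg hy]
          have hr : ∀ y : S κ, (1 / ((1 - δ) * (Fintype.card (S κ):ℝ)))
              * (if Function.update z κ y ∈ A'.toSet then distP B δ k (Function.update z κ y) else 0)
              = (1 / ((1 - δ) * (Fintype.card (S κ):ℝ))) * distP B δ k z := fun y => by
            rw [if_pos ((hmem' z y).2 hz), distP_update B δ hB hk' z y]
          rw [Finset.sum_congr rfl fun y _ => hl y, Finset.sum_congr rfl fun y _ => hr y]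
          rw [Finset.sum_eq_single a (fun b _ hb => if_neg hb)
            (fun h => absurd (Finset.mem_univ a) h), if_pos rfl]
          rw [Finset.sum_const, Finset.card_univ, nsmul_eq_mul]
          have hP := distP_nonneg B hδlt k z
          have hfb := fac_le B hδ0 hδlt k (Function.update z κ a)
          have hsimp : (Fintype.card (S κ):ℝ)
              * (1 / ((1 - δ) * (Fintype.card (S κ):ℝ)) * distP B δ k z)
              = (1 / (1 - δ)) * distP B δ k z := by
            field_simp
          rw [hsimp]
          exact mul_le_mul_of_nonneg_right hfb hP
        · have hl : ∀ y : S κ, (if Function.update z κ y ∈ A.toSet then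
              fac B δ k (Function.update z κ y) * distP B δ k (Function.update z κ y) else 0)
              = 0 := fun y => if_neg (fun hmm => hz ((hmemA z y).1 hmm).2)
          have hr : ∀ y : S κ, (1 / ((1 - δ) * (Fintype.card (S κ):ℝ)))
              * (if Function.update z κ y ∈ A'.toSet then distP B δ k (Function.update z κ y) else 0)
              = 0 := fun y => by
            rw [if_neg (fun hmm => hz ((hmem' z y).1 hmm)), mul_zero]
          rw [Finset.sum_congr rfl fun y _ => hl y, Finset.sum_congr rfl fun y _ => hr y]
      refine hle.trans ?_
      have hIH := IH hkn A' (fun i hi => by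
        rw [hF'] at hi
        obtain ⟨hne, hiF⟩ := Finset.mem_erase.1 hi
        exact lt_of_le_of_ne (Nat.lt_succ_iff.mp (hA i hiF)) fun e => hne (Fin.ext e))
      calc (1 / ((1 - δ) * (Fintype.card (S κ) : ℝ))) * distPMeas B δ k A'.toSet
          ≤ (1 / ((1 - δ) * (Fintype.card (S κ) : ℝ)))
            * ∏ j ∈ A'.fixedFinset, 1 / ((1 - δ) * (Fintype.card (S j) : ℝ)) :=
            mul_le_mul_of_nonneg_left hIH (by positivity)
        _ = ∏ j ∈ A.fixedFinset, 1 / ((1 - δ) * (Fintype.card (S j) : ℝ)) := by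
            rw [hF']
            exact Finset.mul_prod_erase A.fixedFinset
              (fun j => 1 / ((1 - δ) * (Fintype.card (S j) : ℝ))) hκF
    · -- the k-th coordinate is free
      have hYκ : A.Y κ = Set.univ := by
        by_contra hY
        exact hκF (Finset.mem_filter.2 ⟨Finset.mem_univ _, hY⟩)
      have hmem : ∀ (z) (y : S κ), (Function.update z κ y ∈ A.toSet ↔ z ∈ A.toSet) := by
        intro z y
        constructor
        · intro hz i
          rcases eq_or_ne i κ with rfl | hne
          · rw [hYκ]; trivial
          · have := hz i; rwa [Function.update_of_ne hne] at this
        · intro hz i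
          rcases eq_or_ne i κ with rfl | hne
          · rw [Function.update_self, hYκ]; trivial
          · rw [Function.update_of_ne hne]; exact hz i
      have hle : distPMeas B δ (k+1) A.toSet ≤ distPMeas B δ k A.toSet := by
        rw [hmeas]
        unfold distPMeas
        refine sum_fiber_le κ _ _ fun z => ?_
        by_cases hz : z ∈ A.toSet
        · have hl : ∀ y : S κ, (if Function.update z κ y ∈ A.toSet then
              fac B δ k (Function.update z κ y) * distP B δ k (Function.update z κ y) else 0)
              = fac B δ k (Function.update z κ y) * distP B δ k z := fun y => by
            rw [if_pos ((hmem z y).2 hz), distP_update B δ hB hk' z y]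
          have hr : ∀ y : S κ, (if Function.update z κ y ∈ A.toSet then
              distP B δ k (Function.update z κ y) else 0) = distP B δ k z := fun y => by
            rw [if_pos ((hmem z y).2 hz), distP_update B δ hB hk' z y]
          rw [Finset.sum_congr rfl fun y _ => hl y, Finset.sum_congr rfl fun y _ => hr y]
          rw [← Finset.sum_mul, sum_fac B hδ0 hδ1 hk' z]
          rw [Finset.sum_const, Finset.card_univ, nsmul_eq_mul]
        · have hl : ∀ y : S κ, (if Function.update z κ y ∈ A.toSet then
              fac B δ k (Function.update z κ y) * distP B δ k (Function.update z κ y) else 0)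
              = 0 := fun y => if_neg (fun hmm => hz ((hmem z y).1 hmm))
          have hr : ∀ y : S κ, (if Function.update z κ y ∈ A.toSet then
              distP B δ k (Function.update z κ y) else 0) = 0 :=
            fun y => if_neg (fun hmm => hz ((hmem z y).1 hmm))
          rw [Finset.sum_congr rfl fun y _ => hl y, Finset.sum_congr rfl fun y _ => hr y]
      refine hle.trans (IH hkn A fun i hi =>
        lt_of_le_of_ne (Nat.lt_succ_iff.mp (hA i hi)) fun e => hκF ?_)
      rwa [show i = κ from Fin.ext e] at hi
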